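/- Let W = x₁…x₂ₙ be a double occurrence word whose interlacement graph is disconnected, with x₁ and x₂ₙ in different connected components of the interlacement graph. Let i be the greatest index such that x_i lies in the same component as x₁. Then there is no j > i with x_j equal to some x_{j'} with j' < i; consequently x₁…x_i and x_{i+1}…x₂ₙ are both double occurrence words. -/
import Mathlib


/-- `w` is a double occurrence word: every letter occurs exactly twice. -/
def IsDOW {N n : ℕ} (w : Fin N → Fin n) : Prop :=
  ∀ l : Fin n, (Finset.univ.filter fun i => w i = l).card = 2

/-- Letters `a` and `b` occur in the interlaced pattern `a … b … a … b` in `w`. -/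
def Interlaced {N : ℕ} {L : Type*} (w : Fin N → L) (a b : L) : Prop :=
  ∃ i₁ j₁ i₂ j₂ : Fin N, i₁ < j₁ ∧ j₁ < i₂ ∧ i₂ < j₂ ∧
    w i₁ = a ∧ w i₂ = a ∧ w j₁ = b ∧ w j₂ = b

/-- The interlacement graph of a word: letters are adjacent iff they are interlaced. -/
def interlacementGraph {N : ℕ} {L : Type*} (w : Fin N → L) : SimpleGraph L :=
  SimpleGraph.fromRel (Interlaced w)

/-- Suppose the interlacement graph of a double occurrence word `w = x₁…x₂ₙ` is such
that the letters `x₁` and `x₂ₙ` lie in different connected components, and `i` is the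
greatest index whose letter lies in the component of `x₁`.  Then no letter appearing
after position `i` appears before position `i`; consequently `x₁…x_i` and
`x_{i+1}…x₂ₙ` are both double occurrence words. -/
theorem dow_splits_at_component_boundary (n : ℕ) (hn : 1 ≤ n)
    (w : Fin (2 * n) → Fin n) (hw : IsDOW w)
    (hfar : ¬ (interlacementGraph w).Reachable (w ⟨0, by omega⟩) (w ⟨2 * n - 1, by omega⟩))
    (i : Fin (2 * n))
    (hi : (interlacementGraph w).Reachable (w ⟨0, by omega⟩) (w i))
    (himax : ∀ j : Fin (2 * n), i < j →
      ¬ (interlacementGraph w).Reachable (w ⟨0, by omega⟩) (w j)) :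
    (∀ j j' : Fin (2 * n), i < j → j' < i → w j ≠ w j') ∧
      (∀ l : Fin n,
        (Finset.univ.filter fun p : Fin (2 * n) => w p = l ∧ p ≤ i).card = 2 ∨
          (Finset.univ.filter fun p : Fin (2 * n) => w p = l ∧ p ≤ i).card = 0) := by
  classical
  have hpos : (0:ℕ) < 2 * n := by omega
  set G := interlacementGraph w with hG
  set x0 : Fin n := w ⟨0, hpos⟩ with hx0
  have hi' : G.Reachable x0 (w i) := hi
  have hA : ∀ p : Fin (2*n), G.Reachable x0 (w p) → p ≤ i := by
    intro p hp
    by_contra h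
    exact himax p (lt_of_not_ge h) hp
  have part1 : ∀ j j' : Fin (2 * n), i < j → j' < i → w j ≠ w j' := by
    intro j j' hj hj' heq
    set l := w j with hl
    have hnl : ¬ G.Reachable x0 l := himax j hj
    have hwj' : w j' = l := heq.symm
    -- j' is not position 0
    have hj'0 : (⟨0, hpos⟩ : Fin (2*n)) < j' := by
      rcases Nat.eq_zero_or_pos j'.val with h0 | h
      · exfalso
        apply hnl
        have : j' = ⟨0, hpos⟩ := Fin.ext h0
        rw [← hwj', this]
      · exact by simpa [Fin.lt_def] using h
    -- reachable letters don't occur at position j'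
    have hnej' : ∀ m : Fin n, G.Reachable x0 m → ∀ q : Fin (2*n), w q = m → q ≠ j' := by
      intro m hm q hq h
      apply hnl
      rw [← hwj', ← h, hq]
      exact hm
    -- no reachable letter crosses j'
    have hC : ∀ m : Fin n, G.Reachable x0 m →
        ∀ p q : Fin (2*n), w p = m → w q = m → p < j' → j' < q → False := by
      intro m hm p q hp hq hpj hjq
      have hqi : q ≤ i := hA q (by rw [hq]; exact hm)
      have hqj : q < j := lt_of_le_of_lt hqi hj
      have hintl : Interlaced w m l := ⟨p, j', q, j, hpj, hjq, hqj, hp, hq, hwj', rfl⟩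
      have hne : m ≠ l := fun h => hnl (h ▸ hm)
      have hadj : G.Adj m l := by
        rw [hG]
        show (SimpleGraph.fromRel (Interlaced w)).Adj m l
        rw [SimpleGraph.fromRel_adj]
        exact ⟨hne, Or.inl hintl⟩
      exact hnl (hm.trans hadj.reachable)
    -- a reachable letter that is not entirely left of j' is entirely right of j'
    have hLR : ∀ m : Fin n, G.Reachable x0 m → ¬ (∀ p : Fin (2*n), w p = m → p < j') →
        ∀ p : Fin (2*n), w p = m → j' < p := by
      intro m hm hnL p hp
      push_neg at hnL
      obtain ⟨q, hq, hqj⟩ := hnL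
      have hqj' : j' < q := lt_of_le_of_ne hqj (Ne.symm (hnej' m hm q hq))
      by_contra h
      have hpj' : p < j' := lt_of_le_of_ne (le_of_not_gt h) (hnej' m hm p hp)
      exact hC m hm p q hp hq hpj' hqj'
    -- walk induction: leftness propagates along walks
    have hkey : ∀ (a b : Fin n) (pw : G.Walk a b), G.Reachable x0 a →
        (∀ q : Fin (2*n), w q = a → q < j') → (∀ q : Fin (2*n), w q = b → q < j') := by
      intro a b pw
      induction pw with
      | nil => intro _ h; exact h
      | @cons u v b hadj pw ih =>
        intro hru hlu
        have hrv : G.Reachable x0 v := hru.trans hadj.reachable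
        apply ih hrv
        by_contra hnL
        have hRv : ∀ p : Fin (2*n), w p = v → j' < p := hLR v hrv hnL
        have hadj' : u ≠ v ∧ (Interlaced w u v ∨ Interlaced w v u) := by
          rw [hG] at hadj
          exact (SimpleGraph.fromRel_adj (Interlaced w) u v).mp hadj
        rcases hadj'.2 with ⟨i₁, j₁, i₂, j₂, h12, h23, h34, e1, e2, e3, e4⟩ |
            ⟨i₁, j₁, i₂, j₂, h12, h23, h34, e1, e2, e3, e4⟩
        · have h1 := hlu i₂ e2
          have h2 := hRv j₁ e3
          exact absurd (lt_trans (lt_trans h2 h23) h1) (lt_irrefl j')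
        · have h1 := hlu j₁ e3
          have h2 := hRv i₁ e1
          exact absurd (lt_trans (lt_trans h2 h12) h1) (lt_irrefl j')
    -- x0 is entirely left of j'
    have hLx0 : ∀ q : Fin (2*n), w q = x0 → q < j' := by
      intro q hq
      by_contra h
      have hqj' : j' < q := lt_of_le_of_ne (le_of_not_gt h)
        (Ne.symm (hnej' x0 (SimpleGraph.Reachable.refl x0) q hq))
      exact hC x0 (SimpleGraph.Reachable.refl x0) ⟨0, hpos⟩ q rfl hq hj'0 hqj'
    obtain ⟨pw⟩ := hi'
    have := hkey x0 (w i) pw (SimpleGraph.Reachable.refl x0) hLx0 i rfl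
    exact absurd (lt_trans this hj') (lt_irrefl i)
  refine ⟨part1, ?_⟩
  intro l
  set T := Finset.univ.filter (fun p : Fin (2*n) => w p = l ∧ p ≤ i) with hT
  set S := Finset.univ.filter (fun p : Fin (2*n) => w p = l) with hS
  have hsub : T ⊆ S := by
    intro p hp
    simp only [hT, hS, Finset.mem_filter, Finset.mem_univ, true_and] at hp ⊢
    exact hp.1
  have hScard : S.card = 2 := hw l
  have hTle : T.card ≤ 2 := le_trans (Finset.card_le_card hsub) (le_of_eq hScard)
  have hT1 : T.card ≠ 1 := by
    intro h1
    obtain ⟨p, hp⟩ := Finset.card_eq_one.mp h1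
    have hpT : p ∈ T := hp ▸ Finset.mem_singleton_self p
    simp only [hT, Finset.mem_filter, Finset.mem_univ, true_and] at hpT
    obtain ⟨hpl, hpi⟩ := hpT
    have hsd : (S \ T).card = 1 := by
      rw [Finset.card_sdiff_of_subset hsub, hScard, h1]
    obtain ⟨q, hq⟩ := Finset.card_pos.mp (by omega : 0 < (S \ T).card)
    rw [Finset.mem_sdiff] at hq
    obtain ⟨hqS, hqT⟩ := hq
    simp only [hS, Finset.mem_filter, Finset.mem_univ, true_and] at hqS
    have hqi : i < q := by
      by_contra h
      exact hqT (by simp [hT, hqS, le_of_not_gt h])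
    rcases lt_or_eq_of_le hpi with hpi' | hpi'
    · exact part1 q p hqi hpi' (by rw [hqS, hpl])
    · subst hpi'
      exact himax q hqi (by rw [hqS, ← hpl]; exact hi)
  omega
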